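/- arXiv:2509.03967 — 3 statements merged into one kernel-verified Lean document; each statement's English description precedes it below -/
import Mathlib

section
/- Let G be a block graph in which every block has at least three vertices, let B be a block of G of size η that shares exactly one vertex v with the other blocks of G. Then there is no zero forcing set S of G such that S contains exactly η − 2 vertices of B and v ∈ S. -/
namespace ZqForcing

variable {V : Type*}

/-- `u` forces `v` within the allowed vertex set `A`, given the filled set `F`:
`u` is filled, `v` is its unique unfilled neighbor inside `A`. -/
def forceIn (G : SimpleGraph V) (A F : Set V) (u v : V) : Prop :=
  u ∈ A ∧ v ∈ A ∧ u ∈ F ∧ v ∉ F ∧ G.Adj u v ∧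
    ∀ w ∈ A, G.Adj u w → w ∉ F → w = v

/-- One step of the standard zero forcing color change rule. -/
def zfStep (G : SimpleGraph V) (F F' : Set V) : Prop :=
  ∃ u v, forceIn G Set.univ F u v ∧ F' = insert v F

/-- `S` is a zero forcing set: repeated color changes fill all of `V`. -/
def IsZeroForcingSet (G : SimpleGraph V) (S : Set V) : Prop :=
  Relation.ReflTransGen (zfStep G) S Set.univ

/-- The zero forcing number `Z(G)`. -/
noncomputable def zeroForcingNumber (G : SimpleGraph V) : ℕ :=
  sInf {n | ∃ S : Set V, S.ncard = n ∧ IsZeroForcingSet G S}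

/-- Reachability in `G - F`, i.e. through vertices avoiding `F`. -/
def reachAvoid (G : SimpleGraph V) (F : Set V) : V → V → Prop :=
  Relation.ReflTransGen (fun a b => G.Adj a b ∧ a ∉ F ∧ b ∉ F)

/-- The positive semidefinite color change rule: filled `u` forces unfilled `v` when `v`
is the unique neighbor of `u` in the connected component of `G - F` containing `v`. -/
def psdForce (G : SimpleGraph V) (F : Set V) (u v : V) : Prop :=
  u ∈ F ∧ v ∉ F ∧ G.Adj u v ∧
    ∀ w, G.Adj u w → w ∉ F → reachAvoid G F v w → w = v

/-- One step of the positive semidefinite color change rule. -/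
def psdStep (G : SimpleGraph V) (F F' : Set V) : Prop :=
  ∃ u v, psdForce G F u v ∧ F' = insert v F

/-- `S` is a positive semidefinite zero forcing set. -/
def IsPSDForcingSet (G : SimpleGraph V) (S : Set V) : Prop :=
  Relation.ReflTransGen (psdStep G) S Set.univ

/-- The positive semidefinite zero forcing number `Z₊(G)`. -/
noncomputable def psdZeroForcingNumber (G : SimpleGraph V) : ℕ :=
  sInf {n | ∃ S : Set V, S.ncard = n ∧ IsPSDForcingSet G S}

/-- The vertex sets of the connected components of the subgraph induced on
the unfilled vertices. -/
def unfilledComponents (G : SimpleGraph V) (F : Set V) : Set (Set V) :=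
  {C | ∃ v, v ∉ F ∧ C = {w | reachAvoid G F v w}}

/-- A forcing step performed inside the induced subgraph on the vertex set `A`. -/
def rule3Step (G : SimpleGraph V) (A F F' : Set V) : Prop :=
  ∃ u v, forceIn G A F u v ∧ F' = insert v F

/-- `ZqWinFrom G q F t`: starting from the filled set `F`, the player can guarantee to
fill all vertices using at most `t` further tokens against every oracle strategy, in the
`q`-analogue zero forcing game. -/
inductive ZqWinFrom (G : SimpleGraph V) (q : ℕ) : Set V → ℕ → Prop
  | done (t : ℕ) : ZqWinFrom G q Set.univ t
  | rule1 {F : Set V} {t : ℕ} (v : V) (hv : v ∉ F)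
      (h : ZqWinFrom G q (insert v F) t) : ZqWinFrom G q F (t + 1)
  | rule2 {F : Set V} {t : ℕ} (u v : V) (huv : forceIn G Set.univ F u v)
      (h : ZqWinFrom G q (insert v F) t) : ZqWinFrom G q F t
  | rule3 {F : Set V} {t : ℕ} (𝒞 : Set (Set V))
      (h𝒞 : 𝒞 ⊆ unfilledComponents G F) (hcard : q + 1 ≤ 𝒞.ncard)
      (next : ∀ 𝒮 : Set (Set V), 𝒮 ⊆ 𝒞 → 𝒮.Nonempty → Set V)
      (hnext : ∀ (𝒮 : Set (Set V)) (h1 : 𝒮 ⊆ 𝒞) (h2 : 𝒮.Nonempty),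
        Relation.ReflTransGen (rule3Step G (F ∪ ⋃₀ 𝒮)) F (next 𝒮 h1 h2))
      (h : ∀ (𝒮 : Set (Set V)) (h1 : 𝒮 ⊆ 𝒞) (h2 : 𝒮.Nonempty),
        ZqWinFrom G q (next 𝒮 h1 h2) t) :
      ZqWinFrom G q F t

/-- The `q`-analogue zero forcing number `Z_q(G)`. -/
noncomputable def qZeroForcingNumber (G : SimpleGraph V) (q : ℕ) : ℕ :=
  sInf {t | ZqWinFrom G q ∅ t}

/-- The induced subgraph on `B` is connected and has no cut vertex. -/
def NoCutVertex (G : SimpleGraph V) (B : Set V) : Prop :=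
  (G.induce B).Connected ∧
    ∀ v ∈ B, (B \ {v}).Nonempty → (G.induce (B \ {v})).Connected

/-- `B` is a block of `G`: a maximal (vertex set of a) connected subgraph without
a cut vertex. -/
def IsBlock (G : SimpleGraph V) (B : Set V) : Prop :=
  NoCutVertex G B ∧ ∀ B' : Set V, B ⊆ B' → NoCutVertex G B' → B' = B

/-- A block graph: a connected graph each of whose blocks is a clique. -/
def IsBlockGraph (G : SimpleGraph V) : Prop :=
  G.Connected ∧ ∀ B : Set V, IsBlock G B → G.IsClique B

/-- A cactus graph: connected, and every edge lies on at most one cycle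
(cycles being identified when they have the same edge set). -/
def IsCactus (G : SimpleGraph V) : Prop :=
  G.Connected ∧ ∀ (a b : V) (c : G.Walk a a) (d : G.Walk b b),
    c.IsCycle → d.IsCycle → ∀ e ∈ c.edges, e ∈ d.edges →
      ∀ e', e' ∈ c.edges ↔ e' ∈ d.edges

/-- `c` is an induced (chordless) cycle of `G`. -/
def IsInducedCycle (G : SimpleGraph V) {v : V} (c : G.Walk v v) : Prop :=
  c.IsCycle ∧ ∀ x ∈ c.support, ∀ y ∈ c.support, G.Adj x y → s(x, y) ∈ c.edges

/-- Generalized windmill graph of Type I: η disjoint copies of `K_k` together with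
`l` central vertices forming a clique, each central vertex adjacent to everything. -/
def windmillI (η k l : ℕ) : SimpleGraph ((Fin η × Fin k) ⊕ Fin l) :=
  SimpleGraph.fromRel (fun a b =>
    match a, b with
    | Sum.inl (i, _), Sum.inl (i', _) => i = i'
    | Sum.inr _, Sum.inr _ => True
    | _, _ => True)

/-- Generalized windmill graph of Type II: η disjoint copies of `K_k` together with
`l` pairwise nonadjacent central vertices, each adjacent to every clique vertex. -/
def windmillII (η k l : ℕ) : SimpleGraph ((Fin η × Fin k) ⊕ Fin l) :=
  SimpleGraph.fromRel (fun a b =>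
    match a, b with
    | Sum.inl (i, _), Sum.inl (i', _) => i = i'
    | Sum.inr _, Sum.inr _ => False
    | _, _ => True)

/-- Generalized star (spider) graph: a center `none` together with `k` disjoint paths,
the `i`-th of length `m i`, attached to the center at one endpoint. -/
def spider {k : ℕ} (m : Fin k → ℕ) : SimpleGraph (Option (Σ i : Fin k, Fin (m i))) :=
  SimpleGraph.fromRel (fun a b =>
    match a, b with
    | none, some ⟨_, j⟩ => j.val = 0
    | some ⟨i, j⟩, some ⟨i', j'⟩ => i = i' ∧ j.val + 1 = j'.val
    | _, _ => False)

/-!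
The two vertices `x`, `y` of `B` missing from `S` differ from `v`, so they lie in no block but
`B` and all their neighbours lie in the clique `B`. Hence every vertex adjacent to one of them is
adjacent to the other: a filled vertex next to `x` or `y` always sees both as unfilled
neighbours, and neither is ever forced.
-/

open SimpleGraph

lemma noCutVertex_pair {G : SimpleGraph V} {a b : V} (hab : G.Adj a b) :
    NoCutVertex G {a, b} := by
  refine ⟨induce_pair_connected_of_adj hab, fun u hu hne => ?_⟩
  have hsub : ({a, b} \ {u} : Set V).Subsingleton := by
    intro z hz w hw
    simp only [Set.mem_sdiff, Set.mem_insert_iff, Set.mem_singleton_iff] at hu hz hw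
    grind
  have := hsub.coe_sort
  have := hne.to_subtype
  exact ⟨Preconnected.of_subsingleton⟩

lemma exists_isBlock_superset [Finite V] {G : SimpleGraph V} {P : Set V}
    (hP : NoCutVertex G P) : ∃ B, IsBlock G B ∧ P ⊆ B := by
  obtain ⟨B, ⟨hPB, hB⟩, hmax⟩ :=
    (Set.toFinite {B | P ⊆ B ∧ NoCutVertex G B}).exists_maximalFor id _ ⟨P, subset_rfl, hP⟩
  exact ⟨B, ⟨hB, fun B' hBB' hB' => (hmax ⟨hPB.trans hBB', hB'⟩ hBB').antisymm hBB'⟩, hPB⟩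

lemma exists_isBlock_of_adj [Finite V] {G : SimpleGraph V} {a b : V} (hab : G.Adj a b) :
    ∃ B, IsBlock G B ∧ a ∈ B ∧ b ∈ B := by
  obtain ⟨B, hB, hsub⟩ := exists_isBlock_superset (noCutVertex_pair hab)
  exact ⟨B, hB, hsub (.inl rfl), hsub (.inr rfl)⟩

lemma IsBlockGraph.adj_of_adj_of_mem_unique_block [Finite V] {G : SimpleGraph V}
    (hG : IsBlockGraph G) {B : Set V} (hB : IsBlock G B) {z w u : V} (hw : w ∈ B)
    (hz : ∀ B', IsBlock G B' → z ∈ B' → B' = B) (huz : G.Adj u z) (huw : u ≠ w) :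
    G.Adj u w := by
  obtain ⟨B', hB', huB', hzB'⟩ := exists_isBlock_of_adj huz
  exact hG.2 B hB (hz B' hB' hzB' ▸ huB') hw huw

lemma notMem_of_reflTransGen_zfStep {G : SimpleGraph V} {S F : Set V} {x y : V}
    (hxy : x ≠ y) (hx : ∀ u, G.Adj u x → u ≠ y → G.Adj u y)
    (hy : ∀ u, G.Adj u y → u ≠ x → G.Adj u x) (hxS : x ∉ S) (hyS : y ∉ S)
    (h : Relation.ReflTransGen (zfStep G) S F) : x ∉ F ∧ y ∉ F := by
  induction h with
  | refl => exact ⟨hxS, hyS⟩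
  | tail _ hstep ih =>
    obtain ⟨hxF, hyF⟩ := ih
    obtain ⟨u, w, ⟨-, -, huF, -, huw, hunique⟩, rfl⟩ := hstep
    have hux : u ≠ x := fun h => hxF (h ▸ huF)
    have huy : u ≠ y := fun h => hyF (h ▸ huF)
    have hwx : w ≠ x := by
      rintro rfl
      exact hxy (hunique y trivial (hx u huw huy) hyF).symm
    have hwy : w ≠ y := by
      rintro rfl
      exact hxy (hunique x trivial (hy u huw hux) hxF)
    exact ⟨fun h => h.elim (hwx ∘ Eq.symm) hxF, fun h => h.elim (hwy ∘ Eq.symm) hyF⟩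

lemma not_isZeroForcingSet_of_twins {G : SimpleGraph V} {S : Set V} {x y : V}
    (hxy : x ≠ y) (hx : ∀ u, G.Adj u x → u ≠ y → G.Adj u y)
    (hy : ∀ u, G.Adj u y → u ≠ x → G.Adj u x) (hxS : x ∉ S) (hyS : y ∉ S) :
    ¬ IsZeroForcingSet G S := fun h =>
  (notMem_of_reflTransGen_zfStep hxy hx hy hxS hyS h).1 trivial

theorem stmt2_general {V : Type*} [Fintype V] (G : SimpleGraph V)
    (hG : IsBlockGraph G)
    (B : Set V) (hB : IsBlock G B) (η : ℕ) (hη : B.ncard = η)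
    (v : V) (hv : v ∈ B)
    (hshared : ∀ w ∈ B, ((∃ B' : Set V, IsBlock G B' ∧ B' ≠ B ∧ w ∈ B') ↔ w = v))
    (S : Set V) (hcard : (S ∩ B).ncard = η - 2) (hvS : v ∈ S) :
    ¬ IsZeroForcingSet G S := by
  have hsplit := Set.ncard_inter_add_ncard_sdiff_eq_ncard B S B.toFinite
  have hvSB : 0 < (S ∩ B).ncard := Set.ncard_pos (Set.toFinite _) |>.mpr ⟨v, hvS, hv⟩
  rw [Set.inter_comm] at hsplit
  obtain ⟨x, y, hxy, hBS⟩ := Set.ncard_eq_two.mp (show (B \ S).ncard = 2 by omega)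
  have htwin : ∀ z ∈ B \ S, ∀ w ∈ B, ∀ u, G.Adj u z → u ≠ w → G.Adj u w := by
    refine fun z hz w hw u => hG.adj_of_adj_of_mem_unique_block hB hw fun B' hB' hzB' => ?_
    by_contra hne
    exact hz.2 ((hshared z hz.1).mp ⟨B', hB', hne, hzB'⟩ ▸ hvS)
  have hx : x ∈ B \ S := hBS ▸ .inl rfl
  have hy : y ∈ B \ S := hBS ▸ .inr rfl
  exact not_isZeroForcingSet_of_twins hxy (htwin x hx y hy.1) (htwin y hy x hx.1) hx.2 hy.2

/-- in a block graph all of whose blocks have at least three vertices,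
if `B` is a block of size `η` sharing exactly one vertex `v` with the other blocks,
then no zero forcing set `S` contains exactly `η - 2` vertices of `B` with `v ∈ S`. -/
theorem stmt2 {V : Type*} [Fintype V] (G : SimpleGraph V)
    (hG : IsBlockGraph G) (hbig : ∀ B : Set V, IsBlock G B → 3 ≤ B.ncard)
    (B : Set V) (hB : IsBlock G B) (η : ℕ) (hη : B.ncard = η)
    (v : V) (hv : v ∈ B)
    (hshared : ∀ w ∈ B, ((∃ B' : Set V, IsBlock G B' ∧ B' ≠ B ∧ w ∈ B') ↔ w = v))
    (S : Set V) (hcard : (S ∩ B).ncard = η - 2) (hvS : v ∈ S) :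
    ¬ IsZeroForcingSet G S :=
  stmt2_general G hG B hB η hη v hv hshared S hcard hvS

end ZqForcing
end

section
/- For all integers η ≥ 2 and l ≥ 1, the generalized windmill graph of Type I with k = 1 satisfies Z_0(W'(η,1,l)) = l, where Z_0 = Z_+ is the positive semidefinite zero forcing number. -/
namespace ZqForcing

variable {V : Type*}

/-!
The centers form a positive semidefinite forcing set, and for `q = 0` the player can perform
any positive semidefinite force for free by offering the oracle the single component that
contains the forced vertex; hence `Z₀ ≤ Z₊ ≤ l`. Conversely, every move of the game that fills
a vertex without spending a token is a positive semidefinite force, and in `W'(η,1,l)` such a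
force needs `l` filled vertices: if some center is unfilled, `G - F` is connected, so the
forcing vertex has no unfilled neighbour besides the forced one, and then `F ∪ {v}` contains
all centers and a leaf.
-/

section Forcing

variable {G : SimpleGraph V}

lemma reachAvoid_of_adj_of_notMem {F : Set V} {c : V} (hc : c ∉ F)
    (hdom : ∀ w, w ≠ c → G.Adj c w) {v w : V} (hv : v ∉ F) (hw : w ∉ F) :
    reachAvoid G F v w := by
  have from_c : ∀ x ∉ F, reachAvoid G F c x := fun x hx => by
    by_cases hxc : x = c
    · exact hxc ▸ Relation.ReflTransGen.refl
    · exact .single ⟨hdom x hxc, hc, hx⟩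
  have to_c : ∀ x ∉ F, reachAvoid G F x c := fun x hx => by
    by_cases hxc : x = c
    · exact hxc ▸ Relation.ReflTransGen.refl
    · exact .single ⟨(hdom x hxc).symm, hx, hc⟩
  exact (to_c v hv).trans (from_c w hw)

lemma eq_of_reachAvoid_of_neighbors_subset {F : Set V} {x w : V}
    (hnbr : ∀ y, G.Adj x y → y ∈ F) (h : reachAvoid G F x w) : w = x := by
  rcases h.cases_head with rfl | ⟨y, ⟨hxy, -, hy⟩, -⟩
  · rfl
  · exact absurd (hnbr y hxy) hy

lemma psdForce_of_forceIn_univ {F : Set V} {u v : V} (h : forceIn G Set.univ F u v) :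
    psdForce G F u v := by
  obtain ⟨-, -, hu, hv, hadj, huniq⟩ := h
  exact ⟨hu, hv, hadj, fun w huw hw _ => huniq w trivial huw hw⟩

lemma psdForce_of_forceIn_union {F C : Set V} {u v : V} (hC : C ∈ unfilledComponents G F)
    (h : forceIn G (F ∪ C) F u v) : psdForce G F u v := by
  obtain ⟨-, hvFC, hu, hv, hadj, huniq⟩ := h
  obtain ⟨v₀, -, rfl⟩ := hC
  have hv₀v : reachAvoid G F v₀ v := hvFC.resolve_left hv
  exact ⟨hu, hv, hadj, fun w huw hw hvw => huniq w (Or.inr (hv₀v.trans hvw)) huw hw⟩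

lemma forceIn_union_of_psdForce {F : Set V} {u v : V} (h : psdForce G F u v) :
    forceIn G (F ∪ {w | reachAvoid G F v w}) F u v := by
  obtain ⟨hu, hv, hadj, huniq⟩ := h
  refine ⟨Or.inl hu, Or.inr .refl, hu, hv, hadj, fun w hw huw hwF => ?_⟩
  exact huniq w huw hwF (hw.resolve_left hwF)

lemma isPSDForcingSet_of_forall_psdForce [Finite V] {S : Set V}
    (hforce : ∀ F, S ⊆ F → ∀ v ∉ F, ∃ u, psdForce G F u v) : IsPSDForcingSet G S := by
  suffices h : ∀ s : Set V, s.Finite → S ⊆ sᶜ → Relation.ReflTransGen (psdStep G) sᶜ Set.univ by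
    simpa [IsPSDForcingSet] using h Sᶜ Sᶜ.toFinite (by simp)
  intro s hs
  induction s, hs using Set.Finite.induction_on with
  | empty => exact fun _ => by rw [Set.compl_empty]
  | @insert a s ha _ ih =>
    intro hS
    obtain ⟨u, hu⟩ := hforce _ hS a (by simp)
    have hfill : insert a (insert a s)ᶜ = sᶜ := by
      ext x
      by_cases hx : x = a <;> simp [hx, ha]
    exact .head ⟨u, a, hu, hfill.symm⟩ (ih (hS.trans (by simp)))

lemma psdZeroForcingNumber_le_ncard {S : Set V} (h : IsPSDForcingSet G S) :
    psdZeroForcingNumber G ≤ S.ncard :=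
  Nat.sInf_le ⟨S, rfl, h⟩

namespace ZqWinFrom

lemma of_psdForce {F : Set V} {u v : V} {t : ℕ} (hforce : psdForce G F u v)
    (h : ZqWinFrom G 0 (insert v F) t) : ZqWinFrom G 0 F t := by
  set C := {w | reachAvoid G F v w}
  refine .rule3 {C} (Set.singleton_subset_iff.2 ⟨v, hforce.2.1, rfl⟩) (by simp)
    (fun _ _ _ => insert v F) (fun 𝒮 h𝒮 hne => ?_) (fun _ _ _ => h)
  obtain rfl : 𝒮 = {C} := (Set.subset_singleton_iff_eq.1 h𝒮).resolve_left hne.ne_empty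
  rw [Set.sUnion_singleton]
  exact .single ⟨u, v, forceIn_union_of_psdForce hforce, rfl⟩

lemma of_reflTransGen_psdStep {F : Set V} {t : ℕ}
    (h : Relation.ReflTransGen (psdStep G) F Set.univ) : ZqWinFrom G 0 F t := by
  induction h using Relation.ReflTransGen.head_induction_on with
  | refl => exact .done t
  | head hstep _ ih =>
    obtain ⟨u, v, hforce, rfl⟩ := hstep
    exact of_psdForce hforce ih

lemma empty_of_finset {q t : ℕ} (s : Finset V) (h : ZqWinFrom G q s t) :
    ZqWinFrom G q ∅ (t + s.card) := by
  classical
  induction s using Finset.induction_on generalizing t with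
  | empty => simpa using h
  | @insert a s ha ih =>
    rw [Finset.coe_insert] at h
    have := ih (.rule1 a (by simpa using ha) h)
    rwa [Finset.card_insert_of_notMem ha, ← add_assoc, add_right_comm]

lemma empty_of_isPSDForcingSet [Finite V] {S : Set V} (h : IsPSDForcingSet G S) :
    ZqWinFrom G 0 ∅ S.ncard := by
  lift S to Finset V using S.toFinite
  simpa using empty_of_finset S (of_reflTransGen_psdStep (t := 0) h)

lemma le_ncard_add [Finite V] {q k : ℕ} (hforce : ∀ F u v, psdForce G F u v → k ≤ F.ncard)
    (hk : k ≤ Nat.card V) {F : Set V} {t : ℕ} (h : ZqWinFrom G q F t) : k ≤ F.ncard + t := by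
  induction h with
  | done t => rw [Set.ncard_univ]; omega
  | rule1 v hv _ ih =>
    rw [Set.ncard_insert_of_notMem hv] at ih
    omega
  | rule2 u v huv _ _ =>
    have := hforce _ _ _ (psdForce_of_forceIn_univ huv)
    omega
  | @rule3 F t 𝒞 h𝒞 hcard next hnext _ ih =>
    obtain ⟨C, hC⟩ : 𝒞.Nonempty := Set.nonempty_of_ncard_ne_zero (by omega)
    have h1 : {C} ⊆ 𝒞 := Set.singleton_subset_iff.2 hC
    have h2 : ({C} : Set (Set V)).Nonempty := Set.singleton_nonempty C
    rcases (hnext {C} h1 h2).cases_head with heq | ⟨_, ⟨u, v, huv, -⟩, -⟩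
    · simpa [heq] using ih {C} h1 h2
    · rw [Set.sUnion_singleton] at huv
      have := hforce _ _ _ (psdForce_of_forceIn_union (h𝒞 hC) huv)
      omega

end ZqWinFrom

lemma le_qZeroForcingNumber [Finite V] {q k t : ℕ}
    (hwin : ZqWinFrom G q ∅ t) (hforce : ∀ F u v, psdForce G F u v → k ≤ F.ncard)
    (hk : k ≤ Nat.card V) : k ≤ qZeroForcingNumber G q := by
  have h := ZqWinFrom.le_ncard_add hforce hk
    (Nat.sInf_mem (⟨t, hwin⟩ : {t | ZqWinFrom G q ∅ t}.Nonempty))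
  rwa [Set.ncard_empty, zero_add] at h

variable (G) in
lemma qZeroForcingNumber_zero_le_psdZeroForcingNumber [Finite V] :
    qZeroForcingNumber G 0 ≤ psdZeroForcingNumber G := by
  obtain ⟨S, hS, hforcing⟩ : psdZeroForcingNumber G ∈
      {n | ∃ S : Set V, S.ncard = n ∧ IsPSDForcingSet G S} :=
    Nat.sInf_mem ⟨_, Set.univ, rfl, .refl⟩
  rw [← hS]
  exact Nat.sInf_le (ZqWinFrom.empty_of_isPSDForcingSet hforcing)

end Forcing

section Windmill

variable {η l : ℕ}

lemma windmillI_one_adj {a b : (Fin η × Fin 1) ⊕ Fin l} :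
    (windmillI η 1 l).Adj a b ↔ a ≠ b ∧ (a.isRight ∨ b.isRight) := by
  rcases a with ⟨i, x⟩ | c <;> rcases b with ⟨i', x'⟩ | c' <;>
    simp [windmillI, Prod.ext_iff, Fin.fin_one_eq_zero, eq_comm]

lemma ncard_range_inr : (Set.range (Sum.inr : Fin l → (Fin η × Fin 1) ⊕ Fin l)).ncard = l := by
  rw [Set.ncard_range_of_injective Sum.inr_injective, Nat.card_eq_fintype_card,
    Fintype.card_fin]

lemma isPSDForcingSet_windmillI_one_range_inr (hl : 1 ≤ l) :
    IsPSDForcingSet (windmillI η 1 l) (Set.range Sum.inr) := by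
  refine isPSDForcingSet_of_forall_psdForce fun F hF v hv => ⟨Sum.inr ⟨0, hl⟩, ?_⟩
  obtain ⟨p, rfl⟩ : ∃ p, v = Sum.inl p := by
    rcases v with p | c
    · exact ⟨p, rfl⟩
    · exact absurd (hF ⟨c, rfl⟩) hv
  have hnbr : ∀ y, (windmillI η 1 l).Adj (Sum.inl p) y → y ∈ F := by
    rintro (p' | c) hadj
    · simp [windmillI_one_adj] at hadj
    · exact hF ⟨c, rfl⟩
  refine ⟨hF ⟨_, rfl⟩, hv, windmillI_one_adj.2 ⟨Sum.inr_ne_inl, Or.inl rfl⟩, ?_⟩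
  exact fun w _ _ hw => eq_of_reachAvoid_of_neighbors_subset hnbr hw

lemma le_ncard_of_psdForce_windmillI_one (hη : 1 ≤ η) {F : Set ((Fin η × Fin 1) ⊕ Fin l)}
    {u v : (Fin η × Fin 1) ⊕ Fin l} (h : psdForce (windmillI η 1 l) F u v) : l ≤ F.ncard := by
  obtain ⟨hu, hv, -, huniq⟩ := h
  by_cases hcenters : Set.range Sum.inr ⊆ F
  · exact (ncard_range_inr (η := η)).symm.trans_le (Set.ncard_le_ncard hcenters)
  obtain ⟨c, hc⟩ : ∃ c, Sum.inr c ∉ F := by simpa [Set.range_subset_iff] using hcenters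
  have hdom : ∀ w, w ≠ Sum.inr c → (windmillI η 1 l).Adj (Sum.inr c) w :=
    fun w hw => windmillI_one_adj.2 ⟨hw.symm, Or.inl rfl⟩
  have hmem : ∀ w, (windmillI η 1 l).Adj u w → w ∈ insert v F := fun w huw => by
    by_contra hw
    simp only [Set.mem_insert_iff, not_or] at hw
    exact hw.1 (huniq w huw hw.2 (reachAvoid_of_adj_of_notMem hc hdom hv hw.2))
  obtain ⟨p, hp⟩ : ∃ p, insert (Sum.inl p) (Set.range Sum.inr) ⊆ insert v F := by
    rcases u with p | cu
    · refine ⟨p, Set.insert_subset (Or.inr hu) ?_⟩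
      rintro _ ⟨c', rfl⟩
      exact hmem _ (windmillI_one_adj.2 ⟨Sum.inl_ne_inr, Or.inr rfl⟩)
    · refine ⟨(⟨0, hη⟩, 0), fun w _ => ?_⟩
      by_cases hw : w = Sum.inr cu
      · exact hw ▸ Or.inr hu
      · exact hmem w (windmillI_one_adj.2 ⟨Ne.symm hw, Or.inl rfl⟩)
  have := Set.ncard_le_ncard hp
  rw [Set.ncard_insert_of_notMem (by simp), ncard_range_inr] at this
  have := Set.ncard_insert_le v F
  omega

end Windmill

/-- for `η ≥ 2`, `l ≥ 1`, `Z₀(W'(η,1,l)) = l`, where `Z₀ = Z₊`. -/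
theorem stmt12 (η l : ℕ) (hη : 2 ≤ η) (hl : 1 ≤ l) :
    qZeroForcingNumber (windmillI η 1 l) 0 = l ∧
    psdZeroForcingNumber (windmillI η 1 l) = l := by
  have hcenters := isPSDForcingSet_windmillI_one_range_inr (η := η) hl
  have hlower : l ≤ qZeroForcingNumber (windmillI η 1 l) 0 :=
    le_qZeroForcingNumber (ZqWinFrom.empty_of_isPSDForcingSet hcenters)
      (fun _ _ _ => le_ncard_of_psdForce_windmillI_one (by omega)) (by simp)
  have hmiddle := qZeroForcingNumber_zero_le_psdZeroForcingNumber (windmillI η 1 l)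
  have hupper := psdZeroForcingNumber_le_ncard hcenters
  rw [ncard_range_inr] at hupper
  omega

end ZqForcing
end

section
/- For all integers η, k, l ≥ 2 and every integer q ≥ 1, the generalized windmill graph of Type II satisfies Z_q(W''(η,k,l)) = η(k−1) + l. -/
/-!
Upper bound: fill every central vertex and all but one vertex of each clique; each remaining
vertex is then forced by a clique-mate, all of whose other neighbours are filled.

Lower bound: the forcing capacity of a filled set (the number of incomplete cliques, plus one
while some central vertex is unfilled and some clique is complete) never grows when a token is
spent and drops with every color change. Rule 3 does not help: if the unfilled vertices form
two or more components, then either all central vertices are filled, and every force inside the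
chosen components still completes a clique, or all clique vertices are filled, and when the
oracle picks every offered component each clique vertex sees two unfilled central vertices and
forces nothing. So at least `|V| - η = η(k-1) + l` tokens are spent.
-/

namespace ZqForcing

variable {V : Type*}

section Game

variable {G : SimpleGraph V} {q : ℕ}

lemma ncard_compl_insert_add_one [Finite V] {F : Set V} {v : V} (hv : v ∉ F) :
    (insert v F)ᶜ.ncard + 1 = Fᶜ.ncard := by
  have h₁ := Set.ncard_add_ncard_compl (insert v F)
  have h₂ := Set.ncard_add_ncard_compl F
  rw [Set.ncard_insert_of_notMem hv] at h₁
  omega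

lemma reachAvoid_symm {F : Set V} {v w : V} (h : reachAvoid G F v w) : reachAvoid G F w v := by
  induction h with
  | refl => exact .refl
  | tail _ hstep ih => exact .head ⟨hstep.1.symm, hstep.2.2, hstep.2.1⟩ ih

lemma ncard_unfilledComponents_le_one {F : Set V}
    (h : ∀ v w, v ∉ F → w ∉ F → reachAvoid G F v w) {𝒞 : Set (Set V)}
    (h𝒞 : 𝒞 ⊆ unfilledComponents G F) : 𝒞.ncard ≤ 1 := by
  by_contra! h𝒞₂
  obtain ⟨_, _, hC, hC', hne⟩ :=
    (Set.one_lt_ncard_iff (Set.finite_of_ncard_pos (by omega))).1 h𝒞₂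
  obtain ⟨v, hv, rfl⟩ := h𝒞 hC
  obtain ⟨w, hw, rfl⟩ := h𝒞 hC'
  refine hne (Set.ext fun x => ⟨fun hx => ?_, fun hx => ?_⟩)
  · exact (reachAvoid_symm (h v w hv hw)).trans hx
  · exact (h v w hv hw).trans hx

lemma ZqWinFrom.of_union [Finite V] {F S : Set V} {t : ℕ} (h : ZqWinFrom G q (F ∪ S) t) :
    ZqWinFrom G q F (t + (S \ F).ncard) := by
  induction hn : (S \ F).ncard generalizing F with
  | zero =>
    rw [Set.ncard_eq_zero, Set.sdiff_eq_empty] at hn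
    rwa [Set.union_eq_self_of_subset_right hn] at h
  | succ n ih =>
    obtain ⟨v, hvS, hvF⟩ := Set.nonempty_of_ncard_ne_zero (s := S \ F) (by omega)
    have hunion : insert v F ∪ S = F ∪ S := by
      rw [Set.insert_union, Set.insert_eq_of_mem (Set.mem_union_right F hvS)]
    have hdiff : S \ insert v F = (S \ F) \ {v} := by
      ext; simp [and_comm, and_left_comm]
    refine .rule1 v hvF (ih (hunion ▸ h) ?_)
    rw [hdiff]
    have := Set.ncard_sdiff_singleton_add_one (show v ∈ S \ F from ⟨hvS, hvF⟩)
    omega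

lemma ZqWinFrom.of_forceIn [Finite V] (P : Set V → Prop)
    (hP : ∀ F, P F → F ≠ Set.univ → ∃ u v, forceIn G Set.univ F u v ∧ P (insert v F))
    {F : Set V} (hF : P F) (t : ℕ) : ZqWinFrom G q F t := by
  induction hn : Fᶜ.ncard generalizing F with
  | zero =>
    rw [Set.ncard_eq_zero, Set.compl_empty_iff] at hn
    exact hn ▸ .done t
  | succ n ih =>
    have hF' : F ≠ Set.univ := by
      rintro rfl
      simp at hn
    obtain ⟨u, v, huv, hPv⟩ := hP F hF hF'
    have := ncard_compl_insert_add_one huv.2.2.2.1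
    exact .rule2 u v huv (ih hPv (by omega))

lemma ncard_compl_add_le_of_reflTransGen_rule3Step [Finite V] (φ : Set V → ℕ) {A F F' : Set V}
    (hφ : ∀ F₁ F₂, F ⊆ F₁ → rule3Step G A F₁ F₂ → φ F₂ < φ F₁)
    (h : Relation.ReflTransGen (rule3Step G A) F F') :
    F ⊆ F' ∧ Fᶜ.ncard + φ F' ≤ F'ᶜ.ncard + φ F := by
  induction h with
  | refl => exact ⟨subset_rfl, le_rfl⟩
  | tail _ hstep ih =>
    obtain ⟨hsub, hle⟩ := ih
    have hlt := hφ _ _ hsub hstep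
    obtain ⟨u, v, huv, rfl⟩ := hstep
    have := ncard_compl_insert_add_one huv.2.2.2.1
    exact ⟨hsub.trans (Set.subset_insert _ _), by omega⟩

theorem ZqWinFrom.ncard_compl_le [Finite V] (φ : Set V → ℕ)
    (h_fill : ∀ F v, φ (insert v F) ≤ φ F)
    (h_force : ∀ F u v, forceIn G Set.univ F u v → φ (insert v F) < φ F)
    (h_rule3 : ∀ F 𝒞, 𝒞 ⊆ unfilledComponents G F → q + 1 ≤ 𝒞.ncard →
      ∀ F', Relation.ReflTransGen (rule3Step G (F ∪ ⋃₀ 𝒞)) F F' →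
        Fᶜ.ncard + φ F' ≤ F'ᶜ.ncard + φ F)
    {F : Set V} {t : ℕ} (h : ZqWinFrom G q F t) : Fᶜ.ncard ≤ t + φ F := by
  induction h with
  | done => simp
  | @rule1 F _ v hv _ ih =>
    have := ncard_compl_insert_add_one hv
    have := h_fill F v
    omega
  | @rule2 F _ u v huv _ ih =>
    have := ncard_compl_insert_add_one huv.2.2.2.1
    have := h_force F u v huv
    omega
  | @rule3 F _ 𝒞 h𝒞 hcard next hnext _ ih =>
    -- the oracle answers with the whole selection
    have hne : 𝒞.Nonempty := Set.nonempty_of_ncard_ne_zero (by omega)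
    have := h_rule3 F 𝒞 h𝒞 hcard _ (hnext 𝒞 subset_rfl hne)
    have := ih 𝒞 subset_rfl hne
    omega

end Game

section Windmill

variable {η k l : ℕ}

@[simp] lemma windmillII_adj_inl_inl {i i' : Fin η} {a a' : Fin k} :
    (windmillII η k l).Adj (.inl (i, a)) (.inl (i', a')) ↔ i = i' ∧ a ≠ a' := by
  simp only [windmillII, SimpleGraph.fromRel_adj, ne_eq, Sum.inl.injEq, Prod.mk.injEq]
  constructor
  · rintro ⟨h, rfl | rfl⟩ <;> exact ⟨rfl, fun ha => h ⟨rfl, ha⟩⟩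
  · rintro ⟨rfl, h⟩
    exact ⟨fun h' => h h'.2, Or.inl rfl⟩

@[simp] lemma windmillII_adj_inl_inr {x : Fin η × Fin k} {j : Fin l} :
    (windmillII η k l).Adj (.inl x) (.inr j) := by
  simp [windmillII]

@[simp] lemma windmillII_adj_inr_inl {x : Fin η × Fin k} {j : Fin l} :
    (windmillII η k l).Adj (.inr j) (.inl x) :=
  windmillII_adj_inl_inr.symm

@[simp] lemma windmillII_not_adj_inr_inr {j j' : Fin l} :
    ¬ (windmillII η k l).Adj (.inr j) (.inr j') := by
  simp [windmillII]

variable {F : Set ((Fin η × Fin k) ⊕ Fin l)}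

lemma windmillII_reachAvoid {j : Fin l} {x : Fin η × Fin k}
    (hj : .inr j ∉ F) (hx : .inl x ∉ F)
    (v w : (Fin η × Fin k) ⊕ Fin l) (hv : v ∉ F) (hw : w ∉ F) :
    reachAvoid (windmillII η k l) F v w := by
  have to_j : ∀ v, v ∉ F → reachAvoid (windmillII η k l) F v (.inr j) := by
    rintro (y | j') hv
    · exact .single ⟨windmillII_adj_inl_inr, hv, hj⟩
    · rcases eq_or_ne j' j with rfl | -
      · exact .refl
      · exact .head ⟨windmillII_adj_inr_inl, hv, hx⟩
          (.single ⟨windmillII_adj_inl_inr, hx, hj⟩)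
  exact (to_j v hv).trans (reachAvoid_symm (to_j w hw))

lemma windmillII_filled_of_one_lt_ncard {𝒞 : Set (Set ((Fin η × Fin k) ⊕ Fin l))}
    (h𝒞 : 𝒞 ⊆ unfilledComponents (windmillII η k l) F) (h𝒞₂ : 1 < 𝒞.ncard) :
    (∀ j, .inr j ∈ F) ∨ ∀ x, .inl x ∈ F := by
  by_contra! ⟨⟨j, hj⟩, x, hx⟩
  exact (ncard_unfilledComponents_le_one (windmillII_reachAvoid hj hx) h𝒞).not_gt h𝒞₂

def incompleteCliques (F : Set ((Fin η × Fin k) ⊕ Fin l)) : Set (Fin η) :=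
  {i | ∃ a, .inl (i, a) ∉ F}

def HasSpareForce (F : Set ((Fin η × Fin k) ⊕ Fin l)) : Prop :=
  (∃ j, .inr j ∉ F) ∧ ∃ i, ∀ a, .inl (i, a) ∈ F

open Classical in
/-- A bound on the number of color changes still possible: each incomplete clique can receive
one more forced vertex, and while some clique is complete one of its vertices can force the
last central vertex. -/
noncomputable def forcingCapacity (F : Set ((Fin η × Fin k) ⊕ Fin l)) : ℕ :=
  (incompleteCliques F).ncard + if HasSpareForce F then 1 else 0

lemma incompleteCliques_insert_subset (v : (Fin η × Fin k) ⊕ Fin l) :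
    incompleteCliques (insert v F) ⊆ incompleteCliques F :=
  fun _ ⟨a, ha⟩ => ⟨a, fun h => ha (Set.mem_insert_of_mem _ h)⟩

lemma ncard_incompleteCliques_insert_lt {v : (Fin η × Fin k) ⊕ Fin l} {i : Fin η}
    (hi : i ∈ incompleteCliques F) (hi' : i ∉ incompleteCliques (insert v F)) :
    (incompleteCliques (insert v F)).ncard < (incompleteCliques F).ncard :=
  Set.ncard_lt_ncard
    ((Set.ssubset_iff_of_subset (incompleteCliques_insert_subset v)).2 ⟨i, hi, hi'⟩)

lemma forcingCapacity_insert_le (F : Set ((Fin η × Fin k) ⊕ Fin l))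
    (v : (Fin η × Fin k) ⊕ Fin l) : forcingCapacity (insert v F) ≤ forcingCapacity F := by
  have hle := Set.ncard_le_ncard (incompleteCliques_insert_subset (F := F) v)
  unfold forcingCapacity
  split_ifs with hv hF <;> try omega
  obtain ⟨⟨j, hj⟩, i, hi⟩ := hv
  have hi' : i ∈ incompleteCliques F := by
    by_contra! hcomplete
    refine hF ⟨⟨j, fun h => hj (Set.mem_insert_of_mem _ h)⟩, i, ?_⟩
    simpa [incompleteCliques] using hcomplete
  have := ncard_incompleteCliques_insert_lt hi' (fun ⟨a, ha⟩ => ha (hi a))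
  omega

lemma forcingCapacity_insert_inl_lt {i : Fin η} {b : Fin k} (hb : .inl (i, b) ∉ F)
    (hi : ∀ a, a ≠ b → .inl (i, a) ∈ F)
    (hF : (∀ j, .inr j ∈ F) ∨ ∃ i', ∀ a, .inl (i', a) ∈ F) :
    forcingCapacity (insert (.inl (i, b)) F) < forcingCapacity F := by
  have hlt : (incompleteCliques (insert (.inl (i, b)) F)).ncard < (incompleteCliques F).ncard := by
    refine ncard_incompleteCliques_insert_lt ⟨b, hb⟩ fun ⟨a, ha⟩ => ha ?_
    rcases eq_or_ne a b with rfl | hab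
    · exact Set.mem_insert _ _
    · exact Set.mem_insert_of_mem _ (hi a hab)
  have hspare : HasSpareForce (insert (.inl (i, b)) F) → HasSpareForce F := by
    rintro ⟨⟨j, hj⟩, -⟩
    have hjF : .inr j ∉ F := fun h => hj (Set.mem_insert_of_mem _ h)
    exact ⟨⟨j, hjF⟩, hF.resolve_left fun hcent => hjF (hcent j)⟩
  unfold forcingCapacity
  split_ifs <;> grind

lemma forcingCapacity_insert_inr_lt {j : Fin l} {i : Fin η} (hj : .inr j ∉ F)
    (hcent : ∀ j', j' ≠ j → .inr j' ∈ F) (hi : ∀ a, .inl (i, a) ∈ F) :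
    forcingCapacity (insert (.inr j) F) < forcingCapacity F := by
  have hinc : incompleteCliques (insert (.inr j) F) = incompleteCliques F := by
    ext; simp [incompleteCliques]
  have hspare : ¬ HasSpareForce (insert (.inr j) F) := by
    rintro ⟨⟨j', hj'⟩, -⟩
    rcases eq_or_ne j' j with rfl | hne
    · exact hj' (Set.mem_insert _ _)
    · exact hj' (Set.mem_insert_of_mem _ (hcent j' hne))
  unfold forcingCapacity
  rw [hinc, if_neg hspare, if_pos ⟨⟨j, hj⟩, i, hi⟩]
  omega

lemma forcingCapacity_lt_of_forceIn (hη : 2 ≤ η) {u v : (Fin η × Fin k) ⊕ Fin l}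
    (h : forceIn (windmillII η k l) Set.univ F u v) :
    forcingCapacity (insert v F) < forcingCapacity F := by
  obtain ⟨-, -, huF, hvF, hadj, huniq⟩ := h
  have filled : ∀ w, (windmillII η k l).Adj u w → w ≠ v → w ∈ F :=
    fun w hw hne => by_contra fun hwF => hne (huniq w trivial hw hwF)
  rcases u with ⟨i, a⟩ | j <;> rcases v with ⟨i', b⟩ | j'
  · obtain ⟨rfl, -⟩ := windmillII_adj_inl_inl.1 hadj
    refine forcingCapacity_insert_inl_lt hvF (fun c hc => ?_)
      (.inl fun j => filled _ windmillII_adj_inl_inr (by simp))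
    rcases eq_or_ne c a with rfl | hca
    · exact huF
    · exact filled _ (windmillII_adj_inl_inl.2 ⟨rfl, hca.symm⟩) (by simpa using hc)
  · refine forcingCapacity_insert_inr_lt hvF
      (fun j hj => filled _ windmillII_adj_inl_inr (by simpa using hj)) (i := i) fun c => ?_
    rcases eq_or_ne c a with rfl | hca
    · exact huF
    · exact filled _ (windmillII_adj_inl_inl.2 ⟨rfl, hca.symm⟩) (by simp)
  · obtain ⟨i'', hi''⟩ := Fintype.exists_ne_of_one_lt_card (by simp; omega) i'
    exact forcingCapacity_insert_inl_lt hvF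
      (fun c hc => filled _ windmillII_adj_inr_inl (by simp [hc]))
      (.inr ⟨i'', fun c => filled _ windmillII_adj_inr_inl (by simp [hi''])⟩)
  · exact absurd hadj windmillII_not_adj_inr_inr

lemma forcingCapacity_empty (hk : 0 < k) :
    forcingCapacity (∅ : Set ((Fin η × Fin k) ⊕ Fin l)) = η := by
  have hinc : incompleteCliques (∅ : Set ((Fin η × Fin k) ⊕ Fin l)) = Set.univ :=
    Set.eq_univ_of_forall fun _ => ⟨⟨0, hk⟩, Set.notMem_empty _⟩
  have hspare : ¬ HasSpareForce (∅ : Set ((Fin η × Fin k) ⊕ Fin l)) :=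
    fun ⟨_, _, hi⟩ => Set.notMem_empty _ (hi ⟨0, hk⟩)
  simp [forcingCapacity, hinc, hspare]

lemma forcingCapacity_lt_of_rule3Step {F₁ F₂ : Set ((Fin η × Fin k) ⊕ Fin l)}
    {𝒞 : Set (Set ((Fin η × Fin k) ⊕ Fin l))} (hcent : ∀ j, .inr j ∈ F)
    (h𝒞 : 𝒞 ⊆ unfilledComponents (windmillII η k l) F) (hF₁ : F ⊆ F₁)
    (h : rule3Step (windmillII η k l) (F ∪ ⋃₀ 𝒞) F₁ F₂) :
    forcingCapacity F₂ < forcingCapacity F₁ := by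
  obtain ⟨u, v, ⟨-, hvA, huF, hvF, hadj, huniq⟩, rfl⟩ := h
  have hvF' : v ∉ F := fun h => hvF (hF₁ h)
  obtain ⟨C, hC, hvC⟩ := hvA.resolve_left hvF'
  rcases v with ⟨i, b⟩ | j
  · refine forcingCapacity_insert_inl_lt hvF (fun a hab => ?_) (.inl fun j => hF₁ (hcent j))
    by_contra haF₁
    -- an unfilled clique-mate of `v` lies in the component of `v`, so `u` sees it too
    have haC : .inl (i, a) ∈ C := by
      obtain ⟨w, -, rfl⟩ := h𝒞 hC
      exact .tail hvC
        ⟨windmillII_adj_inl_inl.2 ⟨rfl, hab.symm⟩, hvF', fun h => haF₁ (hF₁ h)⟩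
    have hadj' : (windmillII η k l).Adj u (.inl (i, a)) := by
      rcases u with ⟨i', c⟩ | j
      · obtain ⟨rfl, -⟩ := windmillII_adj_inl_inl.1 hadj
        exact windmillII_adj_inl_inl.2 ⟨rfl, by rintro rfl; exact haF₁ huF⟩
      · exact windmillII_adj_inr_inl
    exact hab (by simpa using huniq _ (.inr ⟨C, hC, haC⟩) hadj' haF₁)
  · exact absurd (hcent j) hvF'

lemma windmillII_eq_of_reflTransGen_rule3Step {F' : Set ((Fin η × Fin k) ⊕ Fin l)}
    {𝒞 : Set (Set ((Fin η × Fin k) ⊕ Fin l))} (hcl : ∀ x, .inl x ∈ F)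
    (h𝒞 : 𝒞 ⊆ unfilledComponents (windmillII η k l) F) (h𝒞₂ : 1 < 𝒞.ncard)
    (h : Relation.ReflTransGen (rule3Step (windmillII η k l) (F ∪ ⋃₀ 𝒞)) F F') :
    F' = F := by
  rcases h.cases_head with h | ⟨_, ⟨u, v, ⟨-, -, -, hvF, hadj, huniq⟩, -⟩, -⟩
  · exact h.symm
  have central : ∀ w, w ∉ F → ∃ j, w = .inr j := by
    rintro (x | j) hw
    · exact absurd (hcl x) hw
    · exact ⟨j, rfl⟩
  obtain ⟨j, rfl⟩ := central v hvF
  obtain ⟨x, rfl⟩ : ∃ x, u = .inl x := by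
    rcases u with x | j'
    · exact ⟨x, rfl⟩
    · exact absurd hadj windmillII_not_adj_inr_inr
  -- two selected components, each holding an unfilled central vertex adjacent to `u`
  obtain ⟨_, _, hC, hC', hne⟩ :=
    (Set.one_lt_ncard_iff (Set.finite_of_ncard_pos (by omega))).1 h𝒞₂
  obtain ⟨w, hw, rfl⟩ := h𝒞 hC
  obtain ⟨w', hw', rfl⟩ := h𝒞 hC'
  obtain ⟨j₁, rfl⟩ := central w hw
  obtain ⟨j₂, rfl⟩ := central w' hw'
  have h₁ := huniq _ (.inr ⟨_, hC, .refl⟩) windmillII_adj_inl_inr hw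
  have h₂ := huniq _ (.inr ⟨_, hC', .refl⟩) windmillII_adj_inl_inr hw'
  exact absurd (by rw [h₁, h₂]) hne

theorem ZqWinFrom.ncard_compl_le_windmillII {q : ℕ} (hη : 2 ≤ η) (hq : 1 ≤ q) {t : ℕ}
    (h : ZqWinFrom (windmillII η k l) q F t) : Fᶜ.ncard ≤ t + forcingCapacity F := by
  refine h.ncard_compl_le forcingCapacity forcingCapacity_insert_le
    (fun _ _ _ => forcingCapacity_lt_of_forceIn hη) fun F 𝒞 h𝒞 hcard F' hF' => ?_
  rcases windmillII_filled_of_one_lt_ncard h𝒞 (by omega) with hcent | hcl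
  · exact (ncard_compl_add_le_of_reflTransGen_rule3Step forcingCapacity
      (fun _ _ hF₁ => forcingCapacity_lt_of_rule3Step hcent h𝒞 hF₁) hF').2
  · rw [windmillII_eq_of_reflTransGen_rule3Step hcl h𝒞 (by omega) hF']

theorem ZqWinFrom.windmillII_of_one_unfilled_per_clique {q : ℕ} (hk : 2 ≤ k)
    (hcent : ∀ j, .inr j ∈ F)
    (hcl : ∀ i a b, .inl (i, a) ∉ F → .inl (i, b) ∉ F → a = b)
    (t : ℕ) : ZqWinFrom (windmillII η k l) q F t := by
  refine ZqWinFrom.of_forceIn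
    (fun F : Set ((Fin η × Fin k) ⊕ Fin l) =>
      (∀ j, .inr j ∈ F) ∧ ∀ i a b, .inl (i, a) ∉ F → .inl (i, b) ∉ F → a = b)
    (fun F ⟨hcent, hcl⟩ hF => ?_) ⟨hcent, hcl⟩ t
  obtain ⟨⟨i, b⟩ | j, hw⟩ := (Set.ne_univ_iff_exists_notMem F).1 hF
  · obtain ⟨a, hab⟩ := Fintype.exists_ne_of_one_lt_card (by simp; omega) b
    have haF : .inl (i, a) ∈ F := by_contra fun h => hab (hcl i a b h hw)
    refine ⟨.inl (i, a), .inl (i, b), ⟨trivial, trivial, haF, hw, by simp [hab], ?_⟩,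
      fun j => Set.mem_insert_of_mem _ (hcent j),
      fun i a b ha hb => hcl i a b (fun h => ha (Set.mem_insert_of_mem _ h))
        (fun h => hb (Set.mem_insert_of_mem _ h))⟩
    rintro (⟨i', c⟩ | j) - hadj hwF
    · obtain ⟨rfl, -⟩ := windmillII_adj_inl_inl.1 hadj
      rw [hcl i c b hwF hw]
    · exact absurd (hcent j) hwF
  · exact absurd (hcent j) hw

end Windmill

theorem stmt13_general (η k l : ℕ) (hη : 2 ≤ η) (hk : 2 ≤ k)
    (q : ℕ) (hq : 1 ≤ q) :
    qZeroForcingNumber (windmillII η k l) q = η * (k - 1) + l := by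
  have hk₀ : 0 < k := by omega
  have hcard : Nat.card ((Fin η × Fin k) ⊕ Fin l) = η * (k - 1) + l + η := by
    have : η * k = η * (k - 1) + η := by
      rw [← Nat.mul_add_one, Nat.sub_add_cancel (Nat.one_le_of_lt hk)]
    simp only [Nat.card_eq_fintype_card, Fintype.card_sum, Fintype.card_prod, Fintype.card_fin]
    omega
  -- the player leaves the vertices of `U` unfilled, one per clique, and pays for the rest
  set U := Set.range fun i : Fin η => (.inl (i, ⟨0, hk₀⟩) : (Fin η × Fin k) ⊕ Fin l)
  have hU : U.ncard + Uᶜ.ncard = η * (k - 1) + l + η := by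
    rw [Set.ncard_add_ncard_compl, hcard]
  have hU' : U.ncard = η := by
    rw [Set.ncard_range_of_injective (fun i i' h => by simpa using h), Nat.card_eq_fintype_card,
      Fintype.card_fin]
  have hwin : ZqWinFrom (windmillII η k l) q ∅ (η * (k - 1) + l) := by
    have := (ZqWinFrom.windmillII_of_one_unfilled_per_clique (F := ∅ ∪ Uᶜ) (q := q) hk
      (by simp [U]) (by simp [U]) 0).of_union
    rwa [Set.sdiff_empty, zero_add, (by omega : Uᶜ.ncard = η * (k - 1) + l)] at this
  have hlow : ∀ t, ZqWinFrom (windmillII η k l) q ∅ t → η * (k - 1) + l ≤ t := by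
    intro t ht
    have := ht.ncard_compl_le_windmillII hη hq
    rw [Set.compl_empty, Set.ncard_univ, hcard, forcingCapacity_empty hk₀] at this
    omega
  exact le_antisymm (Nat.sInf_le hwin) (le_csInf ⟨_, hwin⟩ hlow)

/-- for `η, k, l ≥ 2` and `q ≥ 1`, `Z_q(W''(η,k,l)) = η(k-1) + l`. -/
theorem stmt13 (η k l : ℕ) (hη : 2 ≤ η) (hk : 2 ≤ k) (hl : 2 ≤ l)
    (q : ℕ) (hq : 1 ≤ q) :
    qZeroForcingNumber (windmillII η k l) q = η * (k - 1) + l :=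
  stmt13_general η k l hη hk q hq

end ZqForcing
end
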